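/- Any finite-state-controller policy that is winning for the exponential-memory witness MEMDP 𝒩ⁿ must have at least 2ⁿ memory states. -/
import Mathlib


open scoped Classical

/-- States of the exponential-memory witness MEMDP `𝒩ⁿ`:
`state j` are the states `s₀, …, s_n`; `ab j b` are `a_{j+1}` (`b = false`)
and `b_{j+1}` (`b = true`); `guess k` are the guess states `g₁, …, g_n`
(for `k < n`) and the losing sink `g_{n+1}` (for `k = n`); `target` is `W`. -/
inductive WSt (n : ℕ) : Type
  | state (j : Fin (n + 1)) : WSt n
  | ab (j : Fin n) (b : Bool) : WSt n
  | guess (k : Fin (n + 1)) : WSt n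
  | target : WSt n
  deriving DecidableEq, Fintype

/-- Actions: `none` is the unique "move on" action `α_⊗`; `some e` is the
guessing action `α_e` for environment `e`. The `2n` environments are encoded
as pairs `(j₀, b₀) : Fin n × Bool` (environment `2j₀+1` for `b₀ = false`,
`2j₀+2` for `b₀ = true`). -/
abbrev WAct (n : ℕ) := Option (Fin n × Bool)

/-- Probability that, from `s_j`, the choice `b` (i.e., moving to `a_{j+1}`
or `b_{j+1}`) is taken in environment `e`: environment `(j₀, b₀)` forces the
choice `b₀` at stage `j₀` and is uniform elsewhere. -/
noncomputable def chooseProb (n : ℕ) (e : Fin n × Bool) (j : Fin n) (b : Bool) : ℝ :=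
  if j = e.1 then (if b = e.2 then 1 else 0) else 1 / 2

/-- Transition probabilities of `𝒩ⁿ` in environment `e`. -/
noncomputable def WP (n : ℕ) (e : Fin n × Bool) : WSt n → WAct n → WSt n → ℝ
  | WSt.state j, _, WSt.ab j' b =>
      if (j' : ℕ) = (j : ℕ) ∧ (j : ℕ) < n then chooseProb n e j' b else 0
  | WSt.state j, _, WSt.guess k => if (j : ℕ) = n ∧ (k : ℕ) = 0 then 1 else 0
  | WSt.state _, _, _ => 0
  | WSt.ab j _, _, WSt.state j2 => if (j2 : ℕ) = (j : ℕ) + 1 then 1 else 0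
  | WSt.ab _ _, _, _ => 0
  | WSt.guess k, some e', WSt.target => if (k : ℕ) < n ∧ e' = e then 1 else 0
  | WSt.guess k, some e', WSt.guess k2 =>
      if (k : ℕ) < n then (if e' ≠ e ∧ (k2 : ℕ) = (k : ℕ) + 1 then 1 else 0)
      else (if k2 = k then 1 else 0)
  | WSt.guess k, none, WSt.guess k2 =>
      if (k : ℕ) < n then (if (k2 : ℕ) = (k : ℕ) + 1 then 1 else 0)
      else (if k2 = k then 1 else 0)
  | WSt.guess _, _, _ => 0
  | WSt.target, _, WSt.target => 1
  | WSt.target, _, _ => 0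

/-- Step-bounded probability that a finite state controller with memory `Q`,
memory update `δ`, action function `act` reaches the target `W` within `k`
steps in environment `e`, starting in memory state `q` and MEMDP state `x`. -/
noncomputable def fscReachN (n : ℕ) (e : Fin n × Bool) {Q : Type*} [Fintype Q]
    (δ : Q → WSt n → Q) (act : Q → WSt n → WAct n) :
    ℕ → Q → WSt n → ℝ
  | 0, _, x => if x = WSt.target then 1 else 0
  | k + 1, q, x =>
      if x = WSt.target then 1
      else ∑ y, WP n e x (act q x) y * fscReachN n e δ act k (δ q y) y

section Aux

variable {n : ℕ} (e : Fin n × Bool) {Q : Type*} [Fintype Q]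
  (δ : Q → WSt n → Q) (act : Q → WSt n → WAct n) (q₀ : Q)

lemma cpNonneg (j : Fin n) (b : Bool) : 0 ≤ chooseProb n e j b := by
  unfold chooseProb; split_ifs <;> norm_num

lemma cpSum (j : Fin n) :
    chooseProb n e j false + chooseProb n e j true = 1 := by
  rcases e with ⟨j0, b0⟩
  by_cases h : j = j0 <;> cases b0 <;> simp [chooseProb, h] <;> norm_num

lemma cpHalf (j : Fin n) (b : Bool) (h : b = e.2 ∨ j ≠ e.1) :
    (1/2 : ℝ) ≤ chooseProb n e j b := by
  unfold chooseProb
  rcases h with h | h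
  · split_ifs with h1 h2 <;> simp_all <;> norm_num
  · rw [if_neg h]

lemma sumAB (f : WSt n → ℝ) (j : Fin n) (b : Bool) (a : WAct n)
    (hj : (j : ℕ) + 1 < n + 1) :
    ∑ y, WP n e (WSt.ab j b) a y * f y = f (WSt.state ⟨(j : ℕ) + 1, hj⟩) := by
  rw [Finset.sum_eq_single (WSt.state ⟨(j : ℕ) + 1, hj⟩)]
  · simp [WP]
  · rintro y - hy
    rcases y with j2 | ⟨j2, b2⟩ | k | _ <;> simp_all [WP]
    exact fun h => absurd (by ext; simpa using h) hy
  · simp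

lemma sumState_lt (f : WSt n → ℝ) (j : Fin (n + 1)) (a : WAct n) (hj : (j : ℕ) < n) :
    ∑ y, WP n e (WSt.state j) a y * f y
      = chooseProb n e ⟨(j : ℕ), hj⟩ false * f (WSt.ab ⟨(j : ℕ), hj⟩ false)
        + chooseProb n e ⟨(j : ℕ), hj⟩ true * f (WSt.ab ⟨(j : ℕ), hj⟩ true) := by
  have hzero : ∀ y ∈ (Finset.univ : Finset (WSt n)),
      y ∉ ({WSt.ab ⟨(j : ℕ), hj⟩ false, WSt.ab ⟨(j : ℕ), hj⟩ true} : Finset (WSt n)) →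
      WP n e (WSt.state j) a y * f y = 0 := by
    rintro y - hy
    simp only [Finset.mem_insert, Finset.mem_singleton, not_or] at hy
    rcases y with j2 | ⟨j2, b2⟩ | k | _
    · simp [WP]
    · have hne : (j2 : ℕ) ≠ (j : ℕ) := by
        intro h
        have h2 : j2 = ⟨(j : ℕ), hj⟩ := Fin.ext h
        subst h2
        cases b2
        · exact hy.1 rfl
        · exact hy.2 rfl
      simp [WP, hne]
    · have : (j : ℕ) ≠ n := Nat.ne_of_lt hj
      simp [WP, this]
    · simp [WP]
  rw [← Finset.sum_subset (Finset.subset_univ _) hzero,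
    Finset.sum_pair (by simp)]
  simp [WP, hj]

lemma sumState_eq (f : WSt n → ℝ) (j : Fin (n + 1)) (a : WAct n) (hj : (j : ℕ) = n) :
    ∑ y, WP n e (WSt.state j) a y * f y = f (WSt.guess ⟨0, Nat.succ_pos n⟩) := by
  rw [Finset.sum_eq_single (WSt.guess ⟨0, Nat.succ_pos n⟩)]
  · simp [WP, hj]
  · rintro y - hy
    rcases y with j2 | ⟨j2, b2⟩ | k | _
    · simp [WP]
    · simp [WP, hj]
    · have : (k : ℕ) ≠ 0 := by
        intro h
        exact hy (congrArg WSt.guess (Fin.ext (by simpa using h)))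
      simp [WP, this]
    · simp [WP]
  · simp

lemma sumGuess_move (f : WSt n → ℝ) (k : Fin (n + 1)) (a : WAct n)
    (hk : (k : ℕ) < n) (ha : a ≠ some e) (hk1 : (k : ℕ) + 1 < n + 1) :
    ∑ y, WP n e (WSt.guess k) a y * f y = f (WSt.guess ⟨(k : ℕ) + 1, hk1⟩) := by
  rw [Finset.sum_eq_single (WSt.guess ⟨(k : ℕ) + 1, hk1⟩)]
  · rcases a with _ | e' <;> simp_all [WP, hk]
  · rintro y - hy
    rcases y with j2 | ⟨j2, b2⟩ | k2 | _
    · rcases a with _ | e' <;> simp [WP]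
    · rcases a with _ | e' <;> simp [WP]
    · have hne : (k2 : ℕ) ≠ (k : ℕ) + 1 := by
        intro h
        exact hy (congrArg WSt.guess (Fin.ext (by simpa using h)))
      rcases a with _ | e' <;> simp [WP, hk, hne]
    · rcases a with _ | e' <;> simp_all [WP, hk]
  · simp

lemma sumGuess_stay (f : WSt n → ℝ) (k : Fin (n + 1)) (a : WAct n)
    (hk : ¬ (k : ℕ) < n) :
    ∑ y, WP n e (WSt.guess k) a y * f y = f (WSt.guess k) := by
  rw [Finset.sum_eq_single (WSt.guess k)]
  · rcases a with _ | e' <;> simp [WP, hk]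
  · rintro y - hy
    rcases y with j2 | ⟨j2, b2⟩ | k2 | _
    · rcases a with _ | e' <;> simp [WP]
    · rcases a with _ | e' <;> simp [WP]
    · have hne : k2 ≠ k := fun h => hy (congrArg WSt.guess h)
      rcases a with _ | e' <;> simp [WP, hk, hne]
    · rcases a with _ | e' <;> simp [WP, hk]
  · simp

lemma sumGuess_win (f : WSt n → ℝ) (k : Fin (n + 1)) (hk : (k : ℕ) < n) :
    ∑ y, WP n e (WSt.guess k) (some e) y * f y = f WSt.target := by
  rw [Finset.sum_eq_single (WSt.target)]
  · simp [WP, hk]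
  · rintro y - hy
    rcases y with j2 | ⟨j2, b2⟩ | k2 | _ <;> simp_all [WP, hk]
  · simp

lemma sumTarget (f : WSt n → ℝ) (a : WAct n) :
    ∑ y, WP n e WSt.target a y * f y = f WSt.target := by
  rw [Finset.sum_eq_single (WSt.target)]
  · simp [WP]
  · rintro y - hy
    rcases y with j2 | ⟨j2, b2⟩ | k2 | _ <;> simp_all [WP]
  · simp

lemma reach_succ (m : ℕ) (q : Q) (x : WSt n) (hx : x ≠ WSt.target) :
    fscReachN n e δ act (m + 1) q x
      = ∑ y, WP n e x (act q x) y * fscReachN n e δ act m (δ q y) y := by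
  simp [fscReachN, hx]

lemma reachTarget (m : ℕ) (q : Q) :
    fscReachN n e δ act m q WSt.target = 1 := by
  cases m <;> simp [fscReachN]

lemma reachLe1 : ∀ (m : ℕ) (q : Q) (x : WSt n),
    fscReachN n e δ act m q x ≤ 1 := by
  intro m
  induction m with
  | zero =>
    intro q x
    simp only [fscReachN]
    split_ifs <;> norm_num
  | succ m IH =>
    intro q x
    rcases x with j | ⟨j, b⟩ | k | _
    · rcases lt_or_eq_of_le (Nat.lt_succ_iff.mp j.isLt) with hj | hj
      · rw [reach_succ e δ act m q _ (by simp), sumState_lt e _ j _ hj]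
        have h1 := IH (δ q (WSt.ab ⟨(j : ℕ), hj⟩ false)) (WSt.ab ⟨(j : ℕ), hj⟩ false)
        have h2 := IH (δ q (WSt.ab ⟨(j : ℕ), hj⟩ true)) (WSt.ab ⟨(j : ℕ), hj⟩ true)
        have hc0 := cpNonneg e ⟨(j : ℕ), hj⟩ false
        have hc1 := cpNonneg e ⟨(j : ℕ), hj⟩ true
        have hcs := cpSum e ⟨(j : ℕ), hj⟩
        nlinarith
      · rw [reach_succ e δ act m q _ (by simp), sumState_eq e _ j _ hj]
        exact IH _ _
    · rw [reach_succ e δ act m q _ (by simp),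
        sumAB e _ j b _ (by omega)]
      exact IH _ _
    · by_cases hk : (k : ℕ) < n
      · by_cases ha : act q (WSt.guess k) = some e
        · rw [reach_succ e δ act m q _ (by simp), ha, sumGuess_win e _ k hk,
            reachTarget]
        · rw [reach_succ e δ act m q _ (by simp),
            sumGuess_move e _ k _ hk ha (by omega)]
          exact IH _ _
      · rw [reach_succ e δ act m q _ (by simp), sumGuess_stay e _ k _ hk]
        exact IH _ _
    · rw [reachTarget]

/-- `j`-th state index, truncated at `n`. -/
def stIdx (n k : ℕ) : Fin (n + 1) := ⟨min k n, by omega⟩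

/-- Memory of the FSC at state `s_j` after following the phase-one path `π`. -/
def memPath (π : Fin n → Bool) : ℕ → Q
  | 0 => q₀
  | j + 1 =>
    if h : j < n then
      δ (δ (memPath π j) (WSt.ab ⟨j, h⟩ (π ⟨j, h⟩))) (WSt.state ⟨j + 1, by omega⟩)
    else memPath π j

/-- Memory of the FSC at the `k`-th guess state, starting from memory `q` at `s_n`. -/
def memGuess (q : Q) : ℕ → Q
  | 0 => δ q (WSt.guess ⟨0, Nat.succ_pos n⟩)
  | k + 1 => δ (memGuess q k) (WSt.guess (stIdx n (k + 1)))

lemma guessZero (q : Q)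
    (havoid : ∀ k : ℕ, k < n →
      act (memGuess δ q k) (WSt.guess (stIdx n k)) ≠ some e) :
    ∀ (m k : ℕ), fscReachN n e δ act m (memGuess δ q k) (WSt.guess (stIdx n k)) = 0 := by
  intro m
  induction m with
  | zero => intro k; simp [fscReachN]
  | succ m IH =>
    intro k
    rw [reach_succ e δ act m _ _ (by simp)]
    by_cases hk : k < n
    · have hlt : ((stIdx n k : Fin (n + 1)) : ℕ) < n := by
        simp only [stIdx]; omega
      have hlt1 : ((stIdx n k : Fin (n + 1)) : ℕ) + 1 < n + 1 := by omega
      rw [sumGuess_move e _ (stIdx n k) _ hlt (havoid k hk) hlt1]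
      have hidx : (⟨((stIdx n k : Fin (n + 1)) : ℕ) + 1, hlt1⟩ : Fin (n + 1))
          = stIdx n (k + 1) := by
        apply Fin.ext; simp only [stIdx]; omega
      rw [hidx]
      exact IH (k + 1)
    · have hnlt : ¬ ((stIdx n k : Fin (n + 1)) : ℕ) < n := by
        simp only [stIdx]; omega
      rw [sumGuess_stay e _ (stIdx n k) _ hnlt]
      have hidx : stIdx n k = stIdx n (k + 1) := by
        apply Fin.ext; simp only [stIdx]; omega
      rw [hidx]
      exact IH (k + 1)

lemma stateNZero (q : Q) (hn : n < n + 1)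
    (havoid : ∀ k : ℕ, k < n →
      act (memGuess δ q k) (WSt.guess (stIdx n k)) ≠ some e) :
    ∀ m : ℕ, fscReachN n e δ act m q (WSt.state ⟨n, hn⟩) = 0 := by
  intro m
  cases m with
  | zero => simp [fscReachN]
  | succ m =>
    rw [reach_succ e δ act m _ _ (by simp), sumState_eq e _ _ _ rfl]
    have h0 : (⟨0, Nat.succ_pos n⟩ : Fin (n + 1)) = stIdx n 0 := by
      apply Fin.ext; simp [stIdx]
    have hgz := guessZero e δ act q havoid m 0
    rw [show memGuess δ q 0 = δ q (WSt.guess ⟨0, Nat.succ_pos n⟩) from rfl, ← h0] at hgz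
    exact hgz

lemma twoStep (q : Q) (j : ℕ) (hjn : j < n) (m : ℕ) (hj1 : j < n + 1) (hj2 : j + 1 < n + 1) :
    fscReachN n e δ act (m + 2) q (WSt.state ⟨j, hj1⟩)
      = chooseProb n e ⟨j, hjn⟩ false *
          fscReachN n e δ act m (δ (δ q (WSt.ab ⟨j, hjn⟩ false)) (WSt.state ⟨j + 1, hj2⟩))
            (WSt.state ⟨j + 1, hj2⟩)
        + chooseProb n e ⟨j, hjn⟩ true *
          fscReachN n e δ act m (δ (δ q (WSt.ab ⟨j, hjn⟩ true)) (WSt.state ⟨j + 1, hj2⟩))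
            (WSt.state ⟨j + 1, hj2⟩) := by
  rw [reach_succ e δ act (m + 1) q _ (by simp), sumState_lt e _ _ _ hjn]
  rw [reach_succ e δ act m _ _ (by simp), reach_succ e δ act m _ _ (by simp)]
  rw [sumAB e _ ⟨j, hjn⟩ false _ (by omega), sumAB e _ ⟨j, hjn⟩ true _ (by omega)]

lemma mainBound (π : Fin n → Bool) (hcons : π e.1 = e.2)
    (havoid : ∀ k : ℕ, k < n →
      act (memGuess δ (memPath δ q₀ π n) k) (WSt.guess (stIdx n k)) ≠ some e) :
    ∀ (m j : ℕ) (hj : j < n + 1),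
      fscReachN n e δ act m (memPath δ q₀ π j) (WSt.state ⟨j, hj⟩)
        ≤ 1 - (1/2 : ℝ) ^ (n - j) := by
  intro m
  induction m using Nat.strong_induction_on with
  | _ m IHm =>
    intro j hj
    rcases lt_or_eq_of_le (Nat.lt_succ_iff.mp hj) with hjn | hjn
    · -- j < n
      have hpow1 : ((1:ℝ)/2) ^ (n - j) ≤ 1 := by
        apply pow_le_one₀ <;> norm_num
      match m with
      | 0 =>
        simp only [fscReachN]
        rw [if_neg (by simp)]
        linarith
      | 1 =>
        rw [reach_succ e δ act 0 _ _ (by simp), sumState_lt e _ _ _ hjn]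
        simp only [fscReachN]
        rw [if_neg (by simp), if_neg (by simp)]
        simp only [mul_zero, add_zero]
        linarith
      | (m + 2) =>
        rw [twoStep e δ act _ j hjn m hj (by omega)]
        -- on-path memory
        have hmem : δ (δ (memPath δ q₀ π j) (WSt.ab ⟨j, hjn⟩ (π ⟨j, hjn⟩)))
            (WSt.state ⟨j + 1, by omega⟩) = memPath δ q₀ π (j + 1) := by
          rw [memPath, dif_pos hjn]
        have hIH := IHm m (by omega) (j + 1) (by omega)
        have hoff : ∀ q' : Q, fscReachN n e δ act m q' (WSt.state ⟨j + 1, by omega⟩) ≤ 1 :=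
          fun q' => reachLe1 e δ act m q' _
        have hkey : n - j = (n - (j + 1)) + 1 := by omega
        have hW0 : (0:ℝ) ≤ (1/2) ^ (n - (j + 1)) := by positivity
        have hW1 : ((1:ℝ)/2) ^ (n - (j + 1)) ≤ 1 := by
          apply pow_le_one₀ <;> norm_num
        have hc0 := cpNonneg e ⟨j, hjn⟩ false
        have hc1 := cpNonneg e ⟨j, hjn⟩ true
        have hcs := cpSum e ⟨j, hjn⟩
        have hchalf : (1/2 : ℝ) ≤ chooseProb n e ⟨j, hjn⟩ (π ⟨j, hjn⟩) := by
          apply cpHalf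
          by_cases h : (⟨j, hjn⟩ : Fin n) = e.1
          · left; rw [h, hcons]
          · right; exact h
        rw [hkey, pow_succ]
        cases hb : π ⟨j, hjn⟩ with
        | false =>
          rw [hb] at hmem hchalf
          have h1 : fscReachN n e δ act m
              (δ (δ (memPath δ q₀ π j) (WSt.ab ⟨j, hjn⟩ false)) (WSt.state ⟨j + 1, by omega⟩))
              (WSt.state ⟨j + 1, by omega⟩) ≤ 1 - (1/2 : ℝ) ^ (n - (j + 1)) := by
            rw [hmem]; exact hIH
          have h2 := hoff (δ (δ (memPath δ q₀ π j) (WSt.ab ⟨j, hjn⟩ true))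
            (WSt.state ⟨j + 1, by omega⟩))
          nlinarith
        | true =>
          rw [hb] at hmem hchalf
          have h1 : fscReachN n e δ act m
              (δ (δ (memPath δ q₀ π j) (WSt.ab ⟨j, hjn⟩ true)) (WSt.state ⟨j + 1, by omega⟩))
              (WSt.state ⟨j + 1, by omega⟩) ≤ 1 - (1/2 : ℝ) ^ (n - (j + 1)) := by
            rw [hmem]; exact hIH
          have h2 := hoff (δ (δ (memPath δ q₀ π j) (WSt.ab ⟨j, hjn⟩ false))
            (WSt.state ⟨j + 1, by omega⟩))
          nlinarith
    · -- j = n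
      subst hjn
      rw [stateNZero e δ act _ hj havoid m]
      simp

end Aux

/-- Any finite-state-controller policy winning for the exponential-memory
witness MEMDP `𝒩ⁿ` (i.e., reaching `W` almost-surely from `s₀` in all `2n`
environments) has at least `2ⁿ` memory states. -/
theorem fsc_needs_exponential_memory (n : ℕ) (Q : Type*) [Fintype Q]
    (δ : Q → WSt n → Q) (act : Q → WSt n → WAct n) (q₀ : Q)
    (hwin : ∀ e : Fin n × Bool,
      (⨆ k, fscReachN n e δ act k q₀ (WSt.state 0)) = 1) :
    2 ^ n ≤ Fintype.card Q := by
  by_contra hcard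
  push_neg at hcard
  have hcard' : Fintype.card Q < Fintype.card (Fin n → Bool) := by
    simpa using hcard
  obtain ⟨π, π', hne, heq⟩ :=
    Fintype.exists_ne_map_eq_of_card_lt (fun π : Fin n → Bool => memPath δ q₀ π n) hcard'
  set q : Q := memPath δ q₀ π n with hqdef
  have hq' : memPath δ q₀ π' n = q := heq.symm
  -- each consistent environment must be guessed
  have key : ∀ π₀ : Fin n → Bool, memPath δ q₀ π₀ n = q → ∀ j : Fin n,
      ∃ k : Fin n, act (memGuess δ q (k : ℕ)) (WSt.guess (stIdx n (k : ℕ)))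
        = some (j, π₀ j) := by
    intro π₀ hπ₀ j
    by_contra hno
    push_neg at hno
    set e : Fin n × Bool := (j, π₀ j) with hedef
    have havoid : ∀ k : ℕ, k < n →
        act (memGuess δ (memPath δ q₀ π₀ n) k) (WSt.guess (stIdx n k)) ≠ some e := by
      intro k hk
      rw [hπ₀]
      exact hno ⟨k, hk⟩
    have hb := mainBound e δ act q₀ π₀ rfl havoid
    have hle : ∀ m : ℕ, fscReachN n e δ act m q₀ (WSt.state 0) ≤ 1 - (1/2 : ℝ) ^ n := by
      intro m
      have h0 : (0 : Fin (n + 1)) = ⟨0, Nat.succ_pos n⟩ := by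
        apply Fin.ext; simp
      have := hb m 0 (Nat.succ_pos n)
      rw [show memPath δ q₀ π₀ 0 = q₀ from rfl] at this
      rw [h0]
      simpa using this
    have hsup : (⨆ k, fscReachN n e δ act k q₀ (WSt.state 0)) ≤ 1 - (1/2 : ℝ) ^ n :=
      ciSup_le hle
    rw [hwin e] at hsup
    have hpos : (0:ℝ) < (1/2) ^ n := by positivity
    linarith
  -- combinatorics: the ≤ n guesses cover ≥ n + 1 environments
  obtain ⟨i, hi⟩ := Function.ne_iff.mp hne
  haveI : Nonempty (Fin n) := ⟨i⟩
  set S : Finset (Fin n × Bool) :=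
    (Finset.univ.image fun j => (j, π j)) ∪ (Finset.univ.image fun j => (j, π' j)) with hSdef
  have hex : ∀ x ∈ S, ∃ k : Fin n,
      act (memGuess δ q (k : ℕ)) (WSt.guess (stIdx n (k : ℕ))) = some x := by
    intro x hx
    rw [hSdef, Finset.mem_union] at hx
    rcases hx with hx | hx
    · rw [Finset.mem_image] at hx
      obtain ⟨j, -, rfl⟩ := hx
      exact key π rfl j
    · rw [Finset.mem_image] at hx
      obtain ⟨j, -, rfl⟩ := hx
      exact key π' hq' j
  choose g hg using hex
  set g' : Fin n × Bool → Fin n := fun x => if hx : x ∈ S then g x hx else i with hg'def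
  have hinj : Set.InjOn g' S := by
    intro x hx y hy hxy
    have hx' : x ∈ S := hx
    have hy' : y ∈ S := hy
    rw [hg'def] at hxy
    simp only [dif_pos hx', dif_pos hy'] at hxy
    rename' hx' => hx, hy' => hy
    have h1 := hg x hx
    have h2 := hg y hy
    rw [hxy, h2] at h1
    exact (Option.some_injective _ h1).symm
  have hle : S.card ≤ n := by
    have := Finset.card_le_card_of_injOn g' (fun x _ => Finset.mem_univ (g' x)) hinj
    simpa using this
  -- lower bound on S.card
  set T : Finset (Fin n × Bool) := Finset.univ.image fun j => (j, π j) with hTdef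
  have hTcard : T.card = n := by
    rw [hTdef, Finset.card_image_of_injective _ (fun a b h => (Prod.ext_iff.mp h).1)]
    simp
  have hnotmem : (i, π' i) ∉ T := by
    rw [hTdef]
    simp only [Finset.mem_image, not_exists]
    rintro j ⟨-, hj⟩
    rw [Prod.mk.injEq] at hj
    obtain ⟨rfl, h2⟩ := hj
    exact hi h2
  have hsub : insert (i, π' i) T ⊆ S := by
    intro x hx
    rw [Finset.mem_insert] at hx
    rcases hx with rfl | hx
    · rw [hSdef, Finset.mem_union]
      right
      exact Finset.mem_image_of_mem _ (Finset.mem_univ i)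
    · rw [hSdef, Finset.mem_union]
      left
      exact hx
  have hge : n + 1 ≤ S.card := by
    have h1 : (insert (i, π' i) T).card = n + 1 := by
      rw [Finset.card_insert_of_notMem hnotmem, hTcard]
    rw [← h1]
    exact Finset.card_le_card hsub
  omega
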